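/- arXiv:2502.10529 — 2 statements merged into one kernel-verified Lean document; each statement's English description precedes it below -/
import Mathlib

section
/- Let p, r : [0,π] → ℝ be continuous. Let ψ : ℝ × [0,π] → ℝ² be continuous, such that for each λ ∈ ℝ the pair ψ(λ,·) = (ψ₁(λ,·), ψ₂(λ,·)) is a continuously differentiable solution on [0,π] of the Dirac system with parameter λ satisfying ψ₁(λ,π) = 0, ψ₂(λ,π) = 1, and define Δ(λ) = ψ₁(λ,0). Let λ₀ ∈ ℝ and let φ = (φ₁,φ₂) be a continuously differentiable solution of the Dirac system with parameter λ₀ on [0,π] with φ₁(0) = 0, φ₂(0) = 1, and suppose β ∈ ℝ satisfies ψ₁(λ₀,x) = β·φ₁(x) and ψ₂(λ₀,x) = β·φ₂(x) for all x ∈ [0,π]. Then Δ is differentiable at λ₀ with derivative Δ'(λ₀) = β·∫₀^π [ φ₁(x)² + φ₂(x)² ] dx = β·α, where α is the weight number of λ₀. -/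
open Real Set

/-- `Δ'(λ₀) = β·α`: if `ψ(λ, ·)` is, for every `λ`, the solution of the Dirac
system with parameter `λ` satisfying `ψ₁(λ, π) = 0`, `ψ₂(λ, π) = 1`, jointly
continuous in `(λ, x)`, and at `λ₀` we have `ψ(λ₀, ·) = β·φ` where `φ` is the
solution with `φ₁(0) = 0`, `φ₂(0) = 1`, then `Δ(λ) = ψ₁(λ, 0)` is differentiable
at `λ₀` with derivative `β·∫₀^π (φ₁² + φ₂²)`, i.e. `β` times the weight number. -/
theorem dirac_characteristic_derivative_eq_beta_mul_weight
    (p r : ℝ → ℝ)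
    (hp : ContinuousOn p (Icc 0 π)) (hr : ContinuousOn r (Icc 0 π))
    (ψ₁ ψ₂ ψ₁' ψ₂' : ℝ → ℝ → ℝ)
    (hψcont : ContinuousOn (fun q : ℝ × ℝ => (ψ₁ q.1 q.2, ψ₂ q.1 q.2))
      (univ ×ˢ Icc (0:ℝ) π))
    (hψ₁ : ∀ l : ℝ, ∀ x ∈ Icc (0:ℝ) π,
      HasDerivWithinAt (ψ₁ l) (ψ₁' l x) (Icc 0 π) x)
    (hψ₁' : ∀ l : ℝ, ContinuousOn (ψ₁' l) (Icc 0 π))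
    (hψ₂ : ∀ l : ℝ, ∀ x ∈ Icc (0:ℝ) π,
      HasDerivWithinAt (ψ₂ l) (ψ₂' l x) (Icc 0 π) x)
    (hψ₂' : ∀ l : ℝ, ContinuousOn (ψ₂' l) (Icc 0 π))
    (hψeq₁ : ∀ l : ℝ, ∀ x ∈ Icc (0:ℝ) π, ψ₂' l x - p x * ψ₁ l x = l * ψ₁ l x)
    (hψeq₂ : ∀ l : ℝ, ∀ x ∈ Icc (0:ℝ) π, -ψ₁' l x + r x * ψ₂ l x = l * ψ₂ l x)
    (hψπ : ∀ l : ℝ, ψ₁ l π = 0) (hψπ' : ∀ l : ℝ, ψ₂ l π = 1)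
    (lam₀ β : ℝ) (φ₁ φ₂ φ₁' φ₂' : ℝ → ℝ)
    (hφ₁ : ∀ x ∈ Icc (0:ℝ) π, HasDerivWithinAt φ₁ (φ₁' x) (Icc 0 π) x)
    (hφ₁' : ContinuousOn φ₁' (Icc 0 π))
    (hφ₂ : ∀ x ∈ Icc (0:ℝ) π, HasDerivWithinAt φ₂ (φ₂' x) (Icc 0 π) x)
    (hφ₂' : ContinuousOn φ₂' (Icc 0 π))
    (hφeq₁ : ∀ x ∈ Icc (0:ℝ) π, φ₂' x - p x * φ₁ x = lam₀ * φ₁ x)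
    (hφeq₂ : ∀ x ∈ Icc (0:ℝ) π, -φ₁' x + r x * φ₂ x = lam₀ * φ₂ x)
    (hφ0 : φ₁ 0 = 0) (hφ0' : φ₂ 0 = 1)
    (hβ : ∀ x ∈ Icc (0:ℝ) π, ψ₁ lam₀ x = β * φ₁ x ∧ ψ₂ lam₀ x = β * φ₂ x) :
    HasDerivAt (fun l => ψ₁ l 0)
      (β * ∫ x in (0:ℝ)..π, (φ₁ x ^ 2 + φ₂ x ^ 2)) lam₀ := by
  have hπ : (0:ℝ) ≤ π := pi_pos.le
  have h0mem : (0:ℝ) ∈ Icc (0:ℝ) π := ⟨le_refl 0, hπ⟩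
  have hπmem : π ∈ Icc (0:ℝ) π := ⟨hπ, le_refl π⟩
  set G : ℝ → ℝ → ℝ := fun l x => ψ₁ l x * φ₁ x + ψ₂ l x * φ₂ x with hG
  have hψ₁c : ∀ l, ContinuousOn (ψ₁ l) (Icc 0 π) := fun l x hx => (hψ₁ l x hx).continuousWithinAt
  have hψ₂c : ∀ l, ContinuousOn (ψ₂ l) (Icc 0 π) := fun l x hx => (hψ₂ l x hx).continuousWithinAt
  have hφ₁c : ContinuousOn φ₁ (Icc 0 π) := fun x hx => (hφ₁ x hx).continuousWithinAt
  have hφ₂c : ContinuousOn φ₂ (Icc 0 π) := fun x hx => (hφ₂ x hx).continuousWithinAt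
  have hGc : ∀ l, ContinuousOn (G l) (Icc 0 π) := fun l =>
    ((hψ₁c l).mul hφ₁c).add ((hψ₂c l).mul hφ₂c)
  set I : ℝ → ℝ := fun l => ∫ x in (0:ℝ)..π, G l x with hI
  -- FTC identity
  have key : ∀ l, ψ₁ l 0 = -φ₁ π + (l - lam₀) * I l := by
    intro l
    set F : ℝ → ℝ := fun x => ψ₁ l x * φ₂ x - ψ₂ l x * φ₁ x with hF
    have hFd : ∀ x ∈ Icc (0:ℝ) π,
        HasDerivWithinAt F ((lam₀ - l) * G l x) (Icc 0 π) x := by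
      intro x hx
      have h := ((hψ₁ l x hx).mul (hφ₂ x hx)).sub ((hψ₂ l x hx).mul (hφ₁ x hx))
      refine h.congr_deriv (Eq.symm ?_)
      have h1 := hψeq₁ l x hx
      have h2 := hψeq₂ l x hx
      have h3 := hφeq₁ x hx
      have h4 := hφeq₂ x hx
      simp only [hG]
      linear_combination (φ₂ x) * h2 + (-(ψ₂ l x)) * h4 + (-(ψ₁ l x)) * h3 + (φ₁ x) * h1
    have hFc : ContinuousOn F (Icc 0 π) :=
      ((hψ₁c l).mul hφ₂c).sub ((hψ₂c l).mul hφ₁c)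
    have hint : IntervalIntegrable (fun x => (lam₀ - l) * G l x) MeasureTheory.volume 0 π :=
      (continuousOn_const.mul (hGc l)).intervalIntegrable_of_Icc hπ
    have hFTC : (∫ x in (0:ℝ)..π, (lam₀ - l) * G l x) = F π - F 0 := by
      refine intervalIntegral.integral_eq_sub_of_hasDeriv_right_of_le hπ hFc
        (fun x hx => ?_) hint
      exact ((hFd x ⟨hx.1.le, hx.2.le⟩).hasDerivAt (Icc_mem_nhds hx.1 hx.2)).hasDerivWithinAt
    have hconst : (∫ x in (0:ℝ)..π, (lam₀ - l) * G l x) = (lam₀ - l) * I l :=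
      intervalIntegral.integral_const_mul _ _
    have hFπ : F π = -φ₁ π := by simp [hF, hψπ l, hψπ' l]
    have hF0 : F 0 = ψ₁ l 0 := by simp [hF, hφ0, hφ0']
    rw [hconst, hFπ, hF0] at hFTC
    linarith
  -- joint continuity of G
  have hGpc : ContinuousOn (fun q : ℝ × ℝ => G q.1 q.2) (univ ×ˢ Icc (0:ℝ) π) := by
    have h1 : ContinuousOn (fun q : ℝ × ℝ => ψ₁ q.1 q.2) (univ ×ˢ Icc (0:ℝ) π) :=
      continuous_fst.comp_continuousOn hψcont
    have h2 : ContinuousOn (fun q : ℝ × ℝ => ψ₂ q.1 q.2) (univ ×ˢ Icc (0:ℝ) π) :=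
      continuous_snd.comp_continuousOn hψcont
    have h3 : ContinuousOn (fun q : ℝ × ℝ => φ₁ q.2) (univ ×ˢ Icc (0:ℝ) π) :=
      hφ₁c.comp continuous_snd.continuousOn (fun q hq => hq.2)
    have h4 : ContinuousOn (fun q : ℝ × ℝ => φ₂ q.2) (univ ×ˢ Icc (0:ℝ) π) :=
      hφ₂c.comp continuous_snd.continuousOn (fun q hq => hq.2)
    exact (h1.mul h3).add (h2.mul h4)
  -- continuity of I at lam₀
  have hIc : ContinuousAt I lam₀ := by
    obtain ⟨C, hC⟩ := (isCompact_Icc.prod isCompact_Icc).exists_bound_of_continuousOn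
      (f := fun q : ℝ × ℝ => G q.1 q.2)
      (hGpc.mono (prod_mono (subset_univ (Icc (lam₀ - 1) (lam₀ + 1))) subset_rfl))
    have hmain : ContinuousAt (fun l => ∫ x in Ioc (0:ℝ) π, G l x) lam₀ := by
      apply MeasureTheory.continuousAt_of_dominated (bound := fun _ => C)
      · filter_upwards with l
        exact ((hGc l).mono Ioc_subset_Icc_self).aestronglyMeasurable measurableSet_Ioc
      · filter_upwards [Icc_mem_nhds (by linarith : lam₀ - 1 < lam₀)
          (by linarith : lam₀ < lam₀ + 1)] with l hl
        refine MeasureTheory.ae_restrict_of_forall_mem measurableSet_Ioc fun x hx => ?_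
        exact hC (l, x) ⟨hl, Ioc_subset_Icc_self hx⟩
      · exact MeasureTheory.integrable_const C
      · refine MeasureTheory.ae_restrict_of_forall_mem measurableSet_Ioc fun x hx => ?_
        have hx' : x ∈ Icc (0:ℝ) π := Ioc_subset_Icc_self hx
        have h1 : ContinuousWithinAt (fun q : ℝ × ℝ => G q.1 q.2)
            (univ ×ˢ Icc (0:ℝ) π) (lam₀, x) := hGpc _ ⟨mem_univ _, hx'⟩
        have h2 : Filter.Tendsto (fun l : ℝ => ((l, x) : ℝ × ℝ)) (nhds lam₀)
            (nhdsWithin (lam₀, x) (univ ×ˢ Icc (0:ℝ) π)) := by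
          apply tendsto_nhdsWithin_of_tendsto_nhds_of_eventually_within
          · exact (continuous_id.prodMk continuous_const).tendsto lam₀
          · filter_upwards with l
            exact ⟨mem_univ _, hx'⟩
        exact h1.tendsto.comp h2
    have heq : I = fun l => ∫ x in Ioc (0:ℝ) π, G l x := by
      funext l
      simp [hI, intervalIntegral.integral_of_le hπ]
    rw [heq]
    exact hmain
  -- value of I at lam₀
  have hI₀ : I lam₀ = β * ∫ x in (0:ℝ)..π, (φ₁ x ^ 2 + φ₂ x ^ 2) := by
    have hGeq : EqOn (G lam₀) (fun x => β * (φ₁ x ^ 2 + φ₂ x ^ 2)) (uIcc (0:ℝ) π) := by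
      intro x hx
      rw [uIcc_of_le hπ] at hx
      obtain ⟨e1, e2⟩ := hβ x hx
      simp only [hG, e1, e2]
      ring
    calc I lam₀ = ∫ x in (0:ℝ)..π, β * (φ₁ x ^ 2 + φ₂ x ^ 2) :=
          intervalIntegral.integral_congr hGeq
      _ = β * ∫ x in (0:ℝ)..π, (φ₁ x ^ 2 + φ₂ x ^ 2) :=
          intervalIntegral.integral_const_mul _ _
  -- conclude via slope
  rw [hasDerivAt_iff_tendsto_slope]
  have hslope : ∀ᶠ l in nhdsWithin lam₀ {lam₀}ᶜ,
      slope (fun l => ψ₁ l 0) lam₀ l = I l := by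
    filter_upwards [self_mem_nhdsWithin] with l hl
    have hne : l - lam₀ ≠ 0 := sub_ne_zero.2 hl
    have hdiff : ψ₁ l 0 - ψ₁ lam₀ 0 = (l - lam₀) * I l := by
      rw [key l, key lam₀]; ring
    simp only [slope, vsub_eq_sub, smul_eq_mul]
    rw [hdiff]
    field_simp
  rw [← hI₀]
  exact Filter.Tendsto.congr' (hslope.mono fun l h => h.symm)
    (hIc.tendsto.mono_left nhdsWithin_le_nhds)
end

section
/- Let p, r : [0,π] → ℝ be continuous. Let ψ : ℝ × [0,π] → ℝ² be continuous, such that for each λ ∈ ℝ the pair ψ(λ,·) is a continuously differentiable solution on [0,π] of the Dirac system with parameter λ satisfying ψ₁(λ,π) = 0, ψ₂(λ,π) = 1, and define Δ(λ) = ψ₁(λ,0). Let λ₀ ∈ ℝ be such that Δ(λ₀) = 0, and let φ = (φ₁,φ₂) be a continuously differentiable solution of the Dirac system with parameter λ₀ on [0,π] with φ₁(0) = 0, φ₂(0) = 1 and φ₁(π) = 0. Then Δ is differentiable at λ₀ and Δ'(λ₀) ≠ 0; that is, every eigenvalue of the boundary value problem is algebraically simple. -/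
set_option maxHeartbeats 1000000

open Real Set MeasureTheory

private lemma ftcIcc {f f' : ℝ → ℝ} {a b : ℝ} (hab : a ≤ b)
    (hd : ∀ x ∈ Icc a b, HasDerivWithinAt f (f' x) (Icc a b) x)
    (hc : ContinuousOn f' (Icc a b)) :
    ∫ y in a..b, f' y = f b - f a := by
  apply intervalIntegral.integral_eq_sub_of_hasDeriv_right_of_le hab
    (fun x hx => (hd x hx).continuousWithinAt)
  · intro x hx
    exact (hd x (Ioo_subset_Icc_self hx)).mono_of_mem_nhdsWithin
      (Icc_mem_nhdsGT_of_mem ⟨hx.1.le, hx.2⟩)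
  · exact hc.intervalIntegrable_of_Icc hab

/-- Algebraic simplicity of eigenvalues: if `Δ(λ₀) = ψ₁(λ₀, 0) = 0` (so `λ₀` is
an eigenvalue, with `φ₁(π) = 0` for the solution `φ` normalized by `φ₁(0) = 0`,
`φ₂(0) = 1`), then `Δ` is differentiable at `λ₀` and `Δ'(λ₀) ≠ 0`. -/
theorem dirac_eigenvalues_algebraically_simple
    (p r : ℝ → ℝ)
    (hp : ContinuousOn p (Icc 0 π)) (hr : ContinuousOn r (Icc 0 π))
    (ψ₁ ψ₂ ψ₁' ψ₂' : ℝ → ℝ → ℝ)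
    (hψcont : ContinuousOn (fun q : ℝ × ℝ => (ψ₁ q.1 q.2, ψ₂ q.1 q.2))
      (univ ×ˢ Icc (0:ℝ) π))
    (hψ₁ : ∀ l : ℝ, ∀ x ∈ Icc (0:ℝ) π,
      HasDerivWithinAt (ψ₁ l) (ψ₁' l x) (Icc 0 π) x)
    (hψ₁' : ∀ l : ℝ, ContinuousOn (ψ₁' l) (Icc 0 π))
    (hψ₂ : ∀ l : ℝ, ∀ x ∈ Icc (0:ℝ) π,
      HasDerivWithinAt (ψ₂ l) (ψ₂' l x) (Icc 0 π) x)
    (hψ₂' : ∀ l : ℝ, ContinuousOn (ψ₂' l) (Icc 0 π))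
    (hψeq₁ : ∀ l : ℝ, ∀ x ∈ Icc (0:ℝ) π, ψ₂' l x - p x * ψ₁ l x = l * ψ₁ l x)
    (hψeq₂ : ∀ l : ℝ, ∀ x ∈ Icc (0:ℝ) π, -ψ₁' l x + r x * ψ₂ l x = l * ψ₂ l x)
    (hψπ : ∀ l : ℝ, ψ₁ l π = 0) (hψπ' : ∀ l : ℝ, ψ₂ l π = 1)
    (lam₀ : ℝ) (hΔ0 : ψ₁ lam₀ 0 = 0)
    (φ₁ φ₂ φ₁' φ₂' : ℝ → ℝ)
    (hφ₁ : ∀ x ∈ Icc (0:ℝ) π, HasDerivWithinAt φ₁ (φ₁' x) (Icc 0 π) x)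
    (hφ₁' : ContinuousOn φ₁' (Icc 0 π))
    (hφ₂ : ∀ x ∈ Icc (0:ℝ) π, HasDerivWithinAt φ₂ (φ₂' x) (Icc 0 π) x)
    (hφ₂' : ContinuousOn φ₂' (Icc 0 π))
    (hφeq₁ : ∀ x ∈ Icc (0:ℝ) π, φ₂' x - p x * φ₁ x = lam₀ * φ₁ x)
    (hφeq₂ : ∀ x ∈ Icc (0:ℝ) π, -φ₁' x + r x * φ₂ x = lam₀ * φ₂ x)
    (hφ0 : φ₁ 0 = 0) (hφ0' : φ₂ 0 = 1) (hφπ : φ₁ π = 0) :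
    DifferentiableAt ℝ (fun l => ψ₁ l 0) lam₀ ∧
      deriv (fun l => ψ₁ l 0) lam₀ ≠ 0 := by
  have hπ : (0:ℝ) ≤ π := pi_pos.le
  -- continuity of the basic functions
  have hφc1 : ContinuousOn φ₁ (Icc 0 π) := fun x hx => (hφ₁ x hx).continuousWithinAt
  have hφc2 : ContinuousOn φ₂ (Icc 0 π) := fun x hx => (hφ₂ x hx).continuousWithinAt
  have hψc1 : ∀ l, ContinuousOn (ψ₁ l) (Icc 0 π) :=
    fun l x hx => (hψ₁ l x hx).continuousWithinAt
  have hψc2 : ∀ l, ContinuousOn (ψ₂ l) (Icc 0 π) :=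
    fun l x hx => (hψ₂ l x hx).continuousWithinAt
  -- explicit forms of the derivatives
  have hφD1 : ∀ x ∈ Icc (0:ℝ) π, φ₁' x = (r x - lam₀) * φ₂ x := by
    intro x hx; linear_combination - hφeq₂ x hx
  have hφD2 : ∀ x ∈ Icc (0:ℝ) π, φ₂' x = (p x + lam₀) * φ₁ x := by
    intro x hx; linear_combination hφeq₁ x hx
  have hψD1 : ∀ l : ℝ, ∀ x ∈ Icc (0:ℝ) π, ψ₁' l x = (r x - l) * ψ₂ l x := by
    intro l x hx; linear_combination - hψeq₂ l x hx
  have hψD2 : ∀ l : ℝ, ∀ x ∈ Icc (0:ℝ) π, ψ₂' l x = (p x + l) * ψ₁ l x := by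
    intro l x hx; linear_combination hψeq₁ l x hx
  -- continuity of the integrand
  have hgc : ∀ l : ℝ, ContinuousOn (fun x => φ₁ x * ψ₁ l x + φ₂ x * ψ₂ l x) (Icc 0 π) :=
    fun l => (hφc1.mul (hψc1 l)).add (hφc2.mul (hψc2 l))
  -- Key identity : ψ₁ l 0 = (l - lam₀) * ∫ (φ₁ ψ₁ l + φ₂ ψ₂ l)
  have key : ∀ l : ℝ, ψ₁ l 0 =
      (l - lam₀) * ∫ x in (0:ℝ)..π, (φ₁ x * ψ₁ l x + φ₂ x * ψ₂ l x) := by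
    intro l
    have hW : ∀ x ∈ Icc (0:ℝ) π,
        HasDerivWithinAt (fun y => φ₁ y * ψ₂ l y - φ₂ y * ψ₁ l y)
          ((l - lam₀) * (φ₁ x * ψ₁ l x + φ₂ x * ψ₂ l x)) (Icc 0 π) x := by
      intro x hx
      have h := ((hφ₁ x hx).mul (hψ₂ l x hx)).sub ((hφ₂ x hx).mul (hψ₁ l x hx))
      refine h.congr_deriv ?_
      rw [hφD1 x hx, hφD2 x hx, hψD1 l x hx, hψD2 l x hx]; ring
    have hWc : ContinuousOn
        (fun x => (l - lam₀) * (φ₁ x * ψ₁ l x + φ₂ x * ψ₂ l x)) (Icc 0 π) :=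
      continuousOn_const.mul (hgc l)
    have hftc := ftcIcc hπ hW hWc
    rw [intervalIntegral.integral_const_mul] at hftc
    rw [hφπ, hψπ l, hφ0, hφ0'] at hftc
    linear_combination -hftc
  -- continuity of the parametric integral at lam₀
  have htend : Filter.Tendsto (fun l => ∫ x in (0:ℝ)..π, (φ₁ x * ψ₁ l x + φ₂ x * ψ₂ l x))
      (nhds lam₀) (nhds (∫ x in (0:ℝ)..π, (φ₁ x * ψ₁ lam₀ x + φ₂ x * ψ₂ lam₀ x))) := by
    have hsub : (Icc (lam₀-1) (lam₀+1)) ×ˢ Icc (0:ℝ) π ⊆ univ ×ˢ Icc (0:ℝ) π :=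
      prod_mono (subset_univ _) subset_rfl
    have hφ1q : ContinuousOn (fun q : ℝ × ℝ => φ₁ q.2)
        ((Icc (lam₀-1) (lam₀+1)) ×ˢ Icc (0:ℝ) π) :=
      hφc1.comp continuous_snd.continuousOn (fun q hq => hq.2)
    have hφ2q : ContinuousOn (fun q : ℝ × ℝ => φ₂ q.2)
        ((Icc (lam₀-1) (lam₀+1)) ×ˢ Icc (0:ℝ) π) :=
      hφc2.comp continuous_snd.continuousOn (fun q hq => hq.2)
    have hgg : ContinuousOn (fun q : ℝ × ℝ => φ₁ q.2 * ψ₁ q.1 q.2 + φ₂ q.2 * ψ₂ q.1 q.2)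
        ((Icc (lam₀-1) (lam₀+1)) ×ˢ Icc (0:ℝ) π) :=
      (hφ1q.mul (hψcont.fst.mono hsub)).add (hφ2q.mul (hψcont.snd.mono hsub))
    obtain ⟨C, hC⟩ := (isCompact_Icc.prod isCompact_Icc).exists_bound_of_continuousOn hgg
    apply intervalIntegral.tendsto_integral_filter_of_dominated_convergence (fun _ => C)
    · filter_upwards with l
      rw [uIoc_of_le hπ]
      exact (((hgc l).mono Ioc_subset_Icc_self).aestronglyMeasurable measurableSet_Ioc)
    · filter_upwards [Icc_mem_nhds (by linarith : lam₀ - 1 < lam₀)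
        (by linarith : lam₀ < lam₀ + 1)] with l hl
      filter_upwards with x hx
      rw [uIoc_of_le hπ] at hx
      exact hC (l, x) ⟨hl, Ioc_subset_Icc_self hx⟩
    · exact intervalIntegrable_const
    · filter_upwards with x hx
      rw [uIoc_of_le hπ] at hx
      have hxI : x ∈ Icc (0:ℝ) π := Ioc_subset_Icc_self hx
      have hmem : (lam₀, x) ∈ univ ×ˢ Icc (0:ℝ) π := ⟨trivial, hxI⟩
      have hmap : Filter.Tendsto (fun l : ℝ => (l, x)) (nhds lam₀)
          (nhdsWithin (lam₀, x) (univ ×ˢ Icc (0:ℝ) π)) := by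
        apply tendsto_nhdsWithin_of_tendsto_nhds_of_eventually_within
        · exact (continuous_id.prodMk continuous_const).tendsto lam₀
        · exact Filter.Eventually.of_forall fun l => ⟨trivial, hxI⟩
      have hpair := Filter.Tendsto.comp (hψcont (lam₀, x) hmem) hmap
      have h1 : Filter.Tendsto (fun l => ψ₁ l x) (nhds lam₀) (nhds (ψ₁ lam₀ x)) :=
        (continuous_fst.tendsto _).comp hpair
      have h2 : Filter.Tendsto (fun l => ψ₂ l x) (nhds lam₀) (nhds (ψ₂ lam₀ x)) :=
        (continuous_snd.tendsto _).comp hpair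
      exact (Filter.Tendsto.const_mul _ h1).add (Filter.Tendsto.const_mul _ h2)
  -- the derivative exists and equals the integral at lam₀
  have hder : HasDerivAt (fun l => ψ₁ l 0)
      (∫ x in (0:ℝ)..π, (φ₁ x * ψ₁ lam₀ x + φ₂ x * ψ₂ lam₀ x)) lam₀ := by
    rw [hasDerivAt_iff_tendsto_slope]
    refine (htend.mono_left nhdsWithin_le_nhds).congr' ?_
    filter_upwards [self_mem_nhdsWithin] with l hl
    have hlne : (l : ℝ) ≠ lam₀ := hl
    rw [slope_def_field, hΔ0, key l]
    field_simp [sub_ne_zero.mpr hlne]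
    ring
  -- the Wronskian at lam₀ vanishes identically
  have hW0 : ∀ x ∈ Icc (0:ℝ) π, φ₁ x * ψ₂ lam₀ x - φ₂ x * ψ₁ lam₀ x = 0 := by
    intro x hx
    have hsub : Icc x π ⊆ Icc (0:ℝ) π := Icc_subset_Icc hx.1 le_rfl
    have hW : ∀ y ∈ Icc x π,
        HasDerivWithinAt (fun y => φ₁ y * ψ₂ lam₀ y - φ₂ y * ψ₁ lam₀ y)
          ((fun _ => (0:ℝ)) y) (Icc x π) y := by
      intro y hy
      have hy' := hsub hy
      have h := (((hφ₁ y hy').mul (hψ₂ lam₀ y hy')).sub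
        ((hφ₂ y hy').mul (hψ₁ lam₀ y hy'))).mono hsub
      refine h.congr_deriv ?_
      rw [hφD1 y hy', hφD2 y hy', hψD1 lam₀ y hy', hψD2 lam₀ y hy']; ring
    have hftc := ftcIcc hx.2 hW continuousOn_const
    rw [intervalIntegral.integral_zero, hφπ, hψπ lam₀] at hftc
    linear_combination hftc
  -- positivity of E = φ₁² + φ₂² on [0, π]
  obtain ⟨M, hM⟩ := isCompact_Icc.exists_bound_of_continuousOn (hp.add hr)
  have hEc : ContinuousOn (fun x => φ₁ x ^ 2 + φ₂ x ^ 2) (Icc 0 π) :=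
    ((hφc1.pow 2).add (hφc2.pow 2))
  have hEpos : ∀ x ∈ Icc (0:ℝ) π, 0 < φ₁ x ^ 2 + φ₂ x ^ 2 := by
    intro x hx
    have hsub : Icc (0:ℝ) x ⊆ Icc 0 π := Icc_subset_Icc le_rfl hx.2
    have hd : ∀ y ∈ Icc (0:ℝ) x,
        HasDerivWithinAt (fun y => (φ₁ y ^ 2 + φ₂ y ^ 2) * Real.exp (M * y))
          ((2 * (p y + r y) * (φ₁ y * φ₂ y) + M * (φ₁ y ^ 2 + φ₂ y ^ 2)) *
            Real.exp (M * y)) (Icc 0 x) y := by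
      intro y hy
      have hy' := hsub hy
      have hexp : HasDerivAt (fun y : ℝ => Real.exp (M * y)) (Real.exp (M * y) * M) y := by
        simpa using ((hasDerivAt_id y).const_mul M).exp
      refine (((((hφ₁ y hy').pow 2).add ((hφ₂ y hy').pow 2)).mono hsub).mul
        hexp.hasDerivWithinAt).congr_deriv ?_
      rw [hφD1 y hy', hφD2 y hy']; simp only [Pi.add_apply, Pi.pow_apply]; ring
    have hdc : ContinuousOn
        (fun y => (2 * (p y + r y) * (φ₁ y * φ₂ y) + M * (φ₁ y ^ 2 + φ₂ y ^ 2)) *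
          Real.exp (M * y)) (Icc 0 x) := by
      apply ContinuousOn.mul
      · exact (((continuousOn_const.mul ((hp.add hr).mono hsub)).mul
          ((hφc1.mono hsub).mul (hφc2.mono hsub))).add
          (continuousOn_const.mul (hEc.mono hsub)))
      · exact (Real.continuous_exp.comp (continuous_const.mul continuous_id)).continuousOn
    have hftc := ftcIcc hx.1 hd hdc
    have hnn : 0 ≤ ∫ y in (0:ℝ)..x,
        (2 * (p y + r y) * (φ₁ y * φ₂ y) + M * (φ₁ y ^ 2 + φ₂ y ^ 2)) *
          Real.exp (M * y) := by
      apply intervalIntegral.integral_nonneg hx.1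
      intro y hy
      have hy' := hsub hy
      have hb := hM y hy'
      rw [Real.norm_eq_abs, Pi.add_apply] at hb
      obtain ⟨hb1, hb2⟩ := abs_le.1 hb
      have he := (Real.exp_pos (M * y)).le
      have hq1 := sq_nonneg (φ₁ y + φ₂ y)
      have hq2 := sq_nonneg (φ₁ y - φ₂ y)
      have key : 0 ≤ 2 * (p y + r y) * (φ₁ y * φ₂ y) + M * (φ₁ y ^ 2 + φ₂ y ^ 2) := by
        nlinarith [mul_nonneg (by linarith : (0:ℝ) ≤ M + (p y + r y)) hq1,
          mul_nonneg (by linarith : (0:ℝ) ≤ M - (p y + r y)) hq2]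
      exact mul_nonneg key he
    rw [hftc] at hnn
    rw [hφ0, hφ0'] at hnn
    have hx0 : (φ₁ x ^ 2 + φ₂ x ^ 2) * Real.exp (M * x) ≥ 1 := by
      have : ((0:ℝ) ^ 2 + 1 ^ 2) * Real.exp (M * 0) = 1 := by simp
      linarith [hnn, this]
    nlinarith [Real.exp_pos (M * x), hx0]
  -- H = (φ₁ ψ₁ + φ₂ ψ₂) - c E vanishes identically, with c = ψ₂ lam₀ 0
  have hEne : ∀ x ∈ Icc (0:ℝ) π, (φ₁ x ^ 2 + φ₂ x ^ 2) ≠ 0 :=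
    fun x hx => (hEpos x hx).ne'
  have hAc : ContinuousOn
      (fun x => 2 * (p x + r x) * (φ₁ x * φ₂ x) / (φ₁ x ^ 2 + φ₂ x ^ 2)) (Icc 0 π) :=
    ((continuousOn_const.mul (hp.add hr)).mul (hφc1.mul hφc2)).div hEc hEne
  obtain ⟨K, hK⟩ := isCompact_Icc.exists_bound_of_continuousOn hAc
  have hHzero : ∀ x ∈ Icc (0:ℝ) π,
      φ₁ x * ψ₁ lam₀ x + φ₂ x * ψ₂ lam₀ x - ψ₂ lam₀ 0 * (φ₁ x ^ 2 + φ₂ x ^ 2) = 0 := by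
    intro x hx
    have hsub : Icc (0:ℝ) x ⊆ Icc 0 π := Icc_subset_Icc le_rfl hx.2
    -- derivative of Q = H² exp(-2K·)
    have hQd : ∀ y ∈ Icc (0:ℝ) x,
        HasDerivWithinAt
          (fun y => (φ₁ y * ψ₁ lam₀ y + φ₂ y * ψ₂ lam₀ y -
              ψ₂ lam₀ 0 * (φ₁ y ^ 2 + φ₂ y ^ 2)) ^ 2 * Real.exp (-(2 * K) * y))
          ((2 * (φ₁ y * ψ₁ lam₀ y + φ₂ y * ψ₂ lam₀ y -
              ψ₂ lam₀ 0 * (φ₁ y ^ 2 + φ₂ y ^ 2)) *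
            ((p y + r y) * (φ₁ y * ψ₂ lam₀ y + φ₂ y * ψ₁ lam₀ y) -
              ψ₂ lam₀ 0 * (2 * (p y + r y) * (φ₁ y * φ₂ y))) -
            2 * K * (φ₁ y * ψ₁ lam₀ y + φ₂ y * ψ₂ lam₀ y -
              ψ₂ lam₀ 0 * (φ₁ y ^ 2 + φ₂ y ^ 2)) ^ 2) * Real.exp (-(2 * K) * y))
          (Icc 0 x) y := by
      intro y hy
      have hy' := hsub hy
      have hexp : HasDerivAt (fun y : ℝ => Real.exp (-(2 * K) * y))
          (Real.exp (-(2 * K) * y) * (-(2 * K))) y := by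
        simpa using ((hasDerivAt_id y).const_mul (-(2 * K))).exp
      have hH : HasDerivWithinAt
          (fun y => φ₁ y * ψ₁ lam₀ y + φ₂ y * ψ₂ lam₀ y -
            ψ₂ lam₀ 0 * (φ₁ y ^ 2 + φ₂ y ^ 2))
          ((p y + r y) * (φ₁ y * ψ₂ lam₀ y + φ₂ y * ψ₁ lam₀ y) -
            ψ₂ lam₀ 0 * (2 * (p y + r y) * (φ₁ y * φ₂ y))) (Icc 0 π) y := by
        have h := (((hφ₁ y hy').mul (hψ₁ lam₀ y hy')).add
          ((hφ₂ y hy').mul (hψ₂ lam₀ y hy'))).sub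
          ((((hφ₁ y hy').pow 2).add ((hφ₂ y hy').pow 2)).const_mul (ψ₂ lam₀ 0))
        refine h.congr_deriv ?_
        rw [hφD1 y hy', hφD2 y hy', hψD1 lam₀ y hy', hψD2 lam₀ y hy']; ring
      have h := ((hH.mono hsub).pow 2).mul hexp.hasDerivWithinAt
      refine h.congr_deriv ?_
      simp only [Pi.add_apply, Pi.sub_apply, Pi.mul_apply, Pi.pow_apply]
      ring
    have hQc : ContinuousOn
        (fun y => (2 * (φ₁ y * ψ₁ lam₀ y + φ₂ y * ψ₂ lam₀ y -
              ψ₂ lam₀ 0 * (φ₁ y ^ 2 + φ₂ y ^ 2)) *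
            ((p y + r y) * (φ₁ y * ψ₂ lam₀ y + φ₂ y * ψ₁ lam₀ y) -
              ψ₂ lam₀ 0 * (2 * (p y + r y) * (φ₁ y * φ₂ y))) -
            2 * K * (φ₁ y * ψ₁ lam₀ y + φ₂ y * ψ₂ lam₀ y -
              ψ₂ lam₀ 0 * (φ₁ y ^ 2 + φ₂ y ^ 2)) ^ 2) * Real.exp (-(2 * K) * y))
        (Icc 0 x) := by
      have hHc : ContinuousOn (fun y => φ₁ y * ψ₁ lam₀ y + φ₂ y * ψ₂ lam₀ y -
          ψ₂ lam₀ 0 * (φ₁ y ^ 2 + φ₂ y ^ 2)) (Icc 0 π) :=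
        (hgc lam₀).sub (continuousOn_const.mul hEc)
      have hH'c : ContinuousOn
          (fun y => (p y + r y) * (φ₁ y * ψ₂ lam₀ y + φ₂ y * ψ₁ lam₀ y) -
            ψ₂ lam₀ 0 * (2 * (p y + r y) * (φ₁ y * φ₂ y))) (Icc 0 π) :=
        ((hp.add hr).mul ((hφc1.mul (hψc2 lam₀)).add (hφc2.mul (hψc1 lam₀)))).sub
          (continuousOn_const.mul ((continuousOn_const.mul (hp.add hr)).mul
            (hφc1.mul hφc2)))
      exact ((((continuousOn_const.mul (hHc.mono hsub)).mul (hH'c.mono hsub)).sub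
        (continuousOn_const.mul ((hHc.mono hsub).pow 2))).mul
        (Real.continuous_exp.comp (continuous_const.mul continuous_id)).continuousOn)
    have hftc := ftcIcc hx.1 hQd hQc
    -- the integrand is ≤ 0
    have hnp : (∫ y in (0:ℝ)..x,
        (2 * (φ₁ y * ψ₁ lam₀ y + φ₂ y * ψ₂ lam₀ y -
              ψ₂ lam₀ 0 * (φ₁ y ^ 2 + φ₂ y ^ 2)) *
            ((p y + r y) * (φ₁ y * ψ₂ lam₀ y + φ₂ y * ψ₁ lam₀ y) -
              ψ₂ lam₀ 0 * (2 * (p y + r y) * (φ₁ y * φ₂ y))) -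
            2 * K * (φ₁ y * ψ₁ lam₀ y + φ₂ y * ψ₂ lam₀ y -
              ψ₂ lam₀ 0 * (φ₁ y ^ 2 + φ₂ y ^ 2)) ^ 2) * Real.exp (-(2 * K) * y)) ≤ 0 := by
      have : (0:ℝ) ≤ ∫ y in (0:ℝ)..x, (fun y =>
        -((2 * (φ₁ y * ψ₁ lam₀ y + φ₂ y * ψ₂ lam₀ y -
              ψ₂ lam₀ 0 * (φ₁ y ^ 2 + φ₂ y ^ 2)) *
            ((p y + r y) * (φ₁ y * ψ₂ lam₀ y + φ₂ y * ψ₁ lam₀ y) -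
              ψ₂ lam₀ 0 * (2 * (p y + r y) * (φ₁ y * φ₂ y))) -
            2 * K * (φ₁ y * ψ₁ lam₀ y + φ₂ y * ψ₂ lam₀ y -
              ψ₂ lam₀ 0 * (φ₁ y ^ 2 + φ₂ y ^ 2)) ^ 2) * Real.exp (-(2 * K) * y))) y := by
        apply intervalIntegral.integral_nonneg hx.1
        · intro y hy
          have hy' := hsub hy
          rw [neg_nonneg]
          -- identity : H' * E = 2(p+r)φ₁φ₂ * H, using the vanishing Wronskian
          have hWy := hW0 y hy'
          have hEy := hEpos y hy'
          have hAy := hK y hy'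
          rw [Real.norm_eq_abs] at hAy
          have hA2 : 2 * (p y + r y) * (φ₁ y * φ₂ y) / (φ₁ y ^ 2 + φ₂ y ^ 2) ≤ K :=
            (le_abs_self _).trans hAy
          have hH'eq : (p y + r y) * (φ₁ y * ψ₂ lam₀ y + φ₂ y * ψ₁ lam₀ y) -
              ψ₂ lam₀ 0 * (2 * (p y + r y) * (φ₁ y * φ₂ y)) =
              (2 * (p y + r y) * (φ₁ y * φ₂ y) / (φ₁ y ^ 2 + φ₂ y ^ 2)) *
                (φ₁ y * ψ₁ lam₀ y + φ₂ y * ψ₂ lam₀ y -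
                  ψ₂ lam₀ 0 * (φ₁ y ^ 2 + φ₂ y ^ 2)) := by
            rw [div_mul_eq_mul_div, eq_div_iff hEy.ne']
            linear_combination ((p y + r y) * (φ₁ y ^ 2 - φ₂ y ^ 2)) * hWy
          rw [hH'eq]
          have hsq := sq_nonneg (φ₁ y * ψ₁ lam₀ y + φ₂ y * ψ₂ lam₀ y -
            ψ₂ lam₀ 0 * (φ₁ y ^ 2 + φ₂ y ^ 2))
          have he := (Real.exp_pos (-(2 * K) * y)).le
          apply mul_nonpos_of_nonpos_of_nonneg _ he
          nlinarith [hsq, hA2]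
      simp only [intervalIntegral.integral_neg] at this
      linarith
    rw [hftc] at hnp
    have hQ0 : (φ₁ 0 * ψ₁ lam₀ 0 + φ₂ 0 * ψ₂ lam₀ 0 -
        ψ₂ lam₀ 0 * (φ₁ 0 ^ 2 + φ₂ 0 ^ 2)) ^ 2 * Real.exp (-(2 * K) * 0) = 0 := by
      rw [hφ0, hφ0']; norm_num
    rw [hQ0] at hnp
    have hQx : 0 ≤ (φ₁ x * ψ₁ lam₀ x + φ₂ x * ψ₂ lam₀ x -
        ψ₂ lam₀ 0 * (φ₁ x ^ 2 + φ₂ x ^ 2)) ^ 2 * Real.exp (-(2 * K) * x) :=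
      mul_nonneg (sq_nonneg _) (Real.exp_pos _).le
    have heq : (φ₁ x * ψ₁ lam₀ x + φ₂ x * ψ₂ lam₀ x -
        ψ₂ lam₀ 0 * (φ₁ x ^ 2 + φ₂ x ^ 2)) ^ 2 * Real.exp (-(2 * K) * x) = 0 := by
      linarith
    have h2 : (φ₁ x * ψ₁ lam₀ x + φ₂ x * ψ₂ lam₀ x -
        ψ₂ lam₀ 0 * (φ₁ x ^ 2 + φ₂ x ^ 2)) ^ 2 = 0 := by
      rcases mul_eq_zero.1 heq with h | h
      · exact h
      · exact absurd h (Real.exp_pos _).ne'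
    exact pow_eq_zero_iff two_ne_zero |>.mp h2
  -- conclusion: c = ψ₂ lam₀ 0 ≠ 0 and ∫ E > 0
  have hcπ : ψ₂ lam₀ 0 ≠ 0 := by
    have hEπ := hEpos π ⟨hπ, le_rfl⟩
    have hHπ := hHzero π ⟨hπ, le_rfl⟩
    rw [hφπ, hψπ lam₀, hψπ' lam₀] at hHπ
    rw [hφπ] at hEπ
    intro hc0
    rw [hc0] at hHπ
    nlinarith [hEπ, hHπ]
  have hFeq : (∫ x in (0:ℝ)..π, (φ₁ x * ψ₁ lam₀ x + φ₂ x * ψ₂ lam₀ x)) =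
      ψ₂ lam₀ 0 * ∫ x in (0:ℝ)..π, (φ₁ x ^ 2 + φ₂ x ^ 2) := by
    rw [← intervalIntegral.integral_const_mul]
    apply intervalIntegral.integral_congr
    intro x hx
    rw [uIcc_of_le hπ] at hx
    linear_combination hHzero x hx
  have hIpos : 0 < ∫ x in (0:ℝ)..π, (φ₁ x ^ 2 + φ₂ x ^ 2) :=
    intervalIntegral.intervalIntegral_pos_of_pos_on
      (hEc.intervalIntegrable_of_Icc hπ)
      (fun x hx => hEpos x (Ioo_subset_Icc_self hx)) pi_pos
  refine ⟨hder.differentiableAt, ?_⟩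
  rw [hder.deriv, hFeq]
  exact mul_ne_zero hcπ hIpos.ne'
end
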